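/- arXiv:math/0003195 — 2 statements merged into one kernel-verified Lean document; each statement's English description precedes it below -/
import Mathlib

section
/- Let q be a prime power and |GL(n,q)| = ∏_{i=0}^{n−1}(q^n − q^i). For a partition λ, let λ'_i denote the i-th part of the conjugate partition, m_i(λ) the number of parts of λ equal to i, and (1/q)_m = ∏_{j=1}^m (1 − q^{−j}). Then for every n ≥ 1, ∑_{λ ⊢ n} 1/(q^{∑_i (λ'_i)²} · ∏_{i≥1} (1/q)_{m_i(λ)}) = q^{n(n−1)}/|GL(n,q)|. -/
/-- `(x)_m = ∏_{j=1}^m (1 − x·q^{−j})`. -/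
noncomputable def qPoch (q x : ℝ) (m : ℕ) : ℝ := ∏ j ∈ Finset.range m, (1 - x * q⁻¹ ^ (j + 1))

/-- `λ'_i`, the `i`-th part of the conjugate partition: the number of parts of `λ` of size
at least `i`. -/
def conjPart {n : ℕ} (lam : Nat.Partition n) (i : ℕ) : ℕ :=
  (lam.parts.filter (fun j => i ≤ j)).card

section Aux
open Finset

noncomputable def E (t : ℝ) (m : ℕ) : ℝ := ∏ j ∈ Finset.range m, (1 - t ^ (j + 1))

noncomputable def B (t : ℝ) : ℕ → ℕ → ℝ
  | 0, 0 => 1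
  | 0, _ + 1 => 0
  | _ + 1, 0 => 1
  | a + 1, b + 1 => B t a (b + 1) + t ^ (a - b) * B t a b

variable {t : ℝ} (ht0 : 0 < t) (ht1 : t < 1)

lemma E_zero : E t 0 = 1 := by simp [E]

lemma E_succ (s : ℕ) : E t (s + 1) = E t s * (1 - t ^ (s + 1)) := by
  rw [E, prod_range_succ]; rfl

include ht0 ht1 in
lemma one_sub_pow_pos (s : ℕ) : 0 < 1 - t ^ (s + 1) := by
  have : t ^ (s + 1) < 1 := pow_lt_one₀ ht0.le ht1 (Nat.succ_ne_zero s)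
  linarith

include ht0 ht1 in
lemma E_pos (s : ℕ) : 0 < E t s := by
  induction s with
  | zero => simp [E_zero]
  | succ n ih => rw [E_succ]; exact mul_pos ih (one_sub_pow_pos ht0 ht1 n)

include ht0 ht1 in
lemma E_ne (s : ℕ) : E t s ≠ 0 := (E_pos ht0 ht1 s).ne'

lemma B_zero_right (a : ℕ) : B t a 0 = 1 := by cases a <;> rfl

lemma B_succ_succ (a b : ℕ) : B t (a + 1) (b + 1) = B t a (b + 1) + t ^ (a - b) * B t a b := rfl

lemma B_eq_zero {a b : ℕ} (h : a < b) : B t a b = 0 := by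
  induction a generalizing b with
  | zero => obtain ⟨c, rfl⟩ := Nat.exists_eq_add_of_lt h; rfl
  | succ n ih =>
    obtain ⟨b, rfl⟩ : ∃ c, b = c + 1 := ⟨b - 1, by omega⟩
    rw [B_succ_succ, ih (by omega), ih (by omega), mul_zero, add_zero]

lemma B_diag (a : ℕ) : B t a a = 1 := by
  induction a with
  | zero => rfl
  | succ n ih => rw [B_succ_succ, B_eq_zero (by omega), ih, Nat.sub_self, pow_zero, one_mul,
      zero_add]

lemma B_mul_E : ∀ {a b : ℕ}, b ≤ a → B t a b * (E t b * E t (a - b)) = E t a := by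
  intro a
  induction a with
  | zero => intro b hb; interval_cases b; simp [B_zero_right, E_zero]
  | succ n ih =>
    intro b hb
    match b with
    | 0 => simp [B_zero_right, E_zero]
    | b + 1 =>
      rcases eq_or_lt_of_le hb with h | h
      · rw [← h, B_diag, Nat.sub_self, E_zero, mul_one, one_mul]
      · have hbn : b + 1 ≤ n := by omega
        have ih1 := ih hbn
        have ih2 := ih (by omega : b ≤ n)
        have h1 : n + 1 - (b + 1) = n - b := by omega
        have h2 : n - (b + 1) + 1 = n - b := by omega
        have e1 : E t (n - b) = E t (n - (b + 1)) * (1 - t ^ (n - b)) := by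
          rw [← h2, E_succ, h2]
        have e3 : E t (b + 1) = E t b * (1 - t ^ (b + 1)) := E_succ b
        have hpow : t ^ (n - b) * t ^ (b + 1) = t ^ (n + 1) := by
          rw [← pow_add]; congr 1; omega
        rw [B_succ_succ, h1, E_succ n, add_mul]
        calc B t n (b + 1) * (E t (b + 1) * E t (n - b)) +
              t ^ (n - b) * B t n b * (E t (b + 1) * E t (n - b))
            = (B t n (b + 1) * (E t (b + 1) * E t (n - (b + 1)))) * (1 - t ^ (n - b)) +
              t ^ (n - b) * (1 - t ^ (b + 1)) * (B t n b * (E t b * E t (n - b))) := by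
              rw [e1]; nth_rewrite 2 [e3]; ring
          _ = E t n * (1 - t ^ (n + 1)) := by
              rw [ih1, ih2, ← hpow]; ring

include ht0 ht1 in
lemma B_closed {a b : ℕ} (h : b ≤ a) : B t a b = E t a / (E t b * E t (a - b)) := by
  rw [← B_mul_E h]
  field_simp [E_ne ht0 ht1]

include ht0 ht1 in
lemma B_symm {a b : ℕ} (h : b ≤ a) : B t a b = B t a (a - b) := by
  rw [B_closed ht0 ht1 h, B_closed ht0 ht1 (Nat.sub_le a b), Nat.sub_sub_self h, mul_comm]

lemma E_succ_sub {n b : ℕ} (h : b < n) :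
    E t (n - b) = E t (n - (b + 1)) * (1 - t ^ (n - b)) := by
  have hh : n - (b + 1) + 1 = n - b := by omega
  calc E t (n - b) = E t (n - (b + 1) + 1) := by rw [hh]
    _ = E t (n - (b + 1)) * (1 - t ^ (n - (b + 1) + 1)) := E_succ _
    _ = E t (n - (b + 1)) * (1 - t ^ (n - b)) := by rw [hh]

include ht0 ht1 in
lemma B_pascal2 (n b : ℕ) : B t (n + 1) (b + 1) = t ^ (b + 1) * B t n (b + 1) + B t n b := by
  rcases lt_or_ge n b with h | h
  · rw [B_eq_zero (show n < b + 1 by omega), mul_zero, zero_add,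
      B_eq_zero (show n + 1 < b + 1 by omega), B_eq_zero h]
  · have hE := E_ne (t := t) ht0 ht1
    rcases eq_or_lt_of_le h with h3 | h3
    · subst h3
      rw [B_diag, B_eq_zero (by omega), mul_zero, zero_add, B_diag]
    · have hb1n : b + 1 ≤ n := by omega
      apply mul_right_cancel₀ (b := E t (b + 1) * E t (n - b)) (mul_ne_zero (hE _) (hE _))
      have h1 : n + 1 - (b + 1) = n - b := by omega
      have e1 : E t (n - b) = E t (n - (b + 1)) * (1 - t ^ (n - b)) := E_succ_sub h3
      have e3 : E t (b + 1) = E t b * (1 - t ^ (b + 1)) := E_succ b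
      have hpow : t ^ (n - b) * t ^ (b + 1) = t ^ (n + 1) := by
        rw [← pow_add]; congr 1; omega
      have m1 : B t (n + 1) (b + 1) * (E t (b + 1) * E t (n + 1 - (b + 1))) = E t (n + 1) :=
        B_mul_E (by omega)
      rw [h1] at m1
      rw [add_mul, m1]
      calc E t (n + 1)
          = E t n * (1 - t ^ (n + 1)) := E_succ n
        _ = t ^ (b + 1) * ((B t n (b + 1) * (E t (b + 1) * E t (n - (b + 1)))) *
              (1 - t ^ (n - b))) + (B t n b * (E t b * E t (n - b))) * (1 - t ^ (b + 1)) := by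
            rw [B_mul_E hb1n, B_mul_E (by omega : b ≤ n), ← hpow]; ring
        _ = t ^ (b + 1) * B t n (b + 1) * (E t (b + 1) * E t (n - b)) +
              B t n b * (E t (b + 1) * E t (n - b)) := by
            rw [e1]; nth_rewrite 3 [e3]; ring

include ht0 ht1 in
lemma W_id (a : ℕ) : ∀ r, ∑ i ∈ range (a + 1), t ^ (i * (i + r)) * B t a i / E t (i + r)
    = 1 / E t (a + r) := by
  induction a with
  | zero => intro r; simp [B_zero_right]
  | succ a ih =>
    intro r
    have key : ∀ i ∈ range (a + 1),
        t ^ ((i+1) * ((i+1) + r)) * B t (a+1) (i+1) / E t ((i+1) + r)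
        = t ^ ((i+1) * ((i+1) + r)) * B t a (i+1) / E t ((i+1) + r)
          + t ^ (a + r + 1) * (t ^ (i * (i + (r+1))) * B t a i / E t (i + (r+1))) := by
      intro i hi
      obtain ⟨d, rfl⟩ := Nat.exists_eq_add_of_le (Finset.mem_range_succ_iff.mp hi)
      have hd : (i + d) - i = d := by omega
      have hp : t ^ ((i+1) * ((i+1) + r)) * t ^ d
          = t ^ ((i + d) + r + 1) * t ^ (i * (i + (r+1))) := by
        rw [← pow_add, ← pow_add]
        congr 1
        ring
      have hE : ((i+1) + r) = (i + (r+1)) := by omega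
      rw [B_succ_succ, hd, hE] at *
      rw [← mul_div_assoc, ← add_div]
      congr 1
      linear_combination (B t (i + d) i) * hp
    rw [Finset.sum_range_succ', Finset.sum_congr rfl key, Finset.sum_add_distrib, ← mul_sum,
      ih (r + 1)]
    have hg : ∑ i ∈ range (a + 1),
        t ^ ((i+1) * ((i+1) + r)) * B t a (i+1) / E t ((i+1) + r)
        = 1 / E t (a + r) - t ^ (0 * (0 + r)) * B t a 0 / E t (0 + r) := by
      have h2 : ∑ i ∈ range (a + 1 + 1), t ^ (i * (i + r)) * B t a i / E t (i + r)
          = 1 / E t (a + r) := by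
        rw [Finset.sum_range_succ, ih r, B_eq_zero (by omega : a < a + 1)]
        simp
      rw [Finset.sum_range_succ'] at h2
      linarith [h2]
    rw [hg]
    simp only [B_zero_right, Nat.zero_mul, pow_zero, one_mul, Nat.zero_add, mul_one]
    have e : E t (a + 1 + r) = E t (a + r) * (1 - t ^ (a + r + 1)) := by
      rw [show a + 1 + r = (a + r) + 1 by omega, E_succ]
    rw [show a + (r + 1) = a + 1 + r by omega, e]
    have h1 := E_ne ht0 ht1 (a + r)
    have h2 : (1 : ℝ) - t ^ (a + r + 1) ≠ 0 := (one_sub_pow_pos ht0 ht1 (a + r)).ne'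
    field_simp
    ring

include ht0 ht1 in
lemma V_id (a : ℕ) : ∀ r k, ∑ i ∈ range (a + 1), t ^ (i * (i + r)) * B t a i * B t k (i + r)
    = B t (a + k) (a + r) := by
  induction a with
  | zero => intro r k; simp [B_zero_right]
  | succ a ih =>
    intro r k
    have key : ∀ i ∈ range (a + 1),
        t ^ ((i+1) * ((i+1) + r)) * B t (a+1) (i+1) * B t k ((i+1) + r)
        = t ^ ((i+1) * ((i+1) + r)) * B t a (i+1) * B t k ((i+1) + r)
          + t ^ (a + r + 1) * (t ^ (i * (i + (r+1))) * B t a i * B t k (i + (r+1))) := by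
      intro i hi
      obtain ⟨d, rfl⟩ := Nat.exists_eq_add_of_le (Finset.mem_range_succ_iff.mp hi)
      have hd : (i + d) - i = d := by omega
      have hp : t ^ ((i+1) * ((i+1) + r)) * t ^ d
          = t ^ ((i + d) + r + 1) * t ^ (i * (i + (r+1))) := by
        rw [← pow_add, ← pow_add]
        congr 1
        ring
      have hE : ((i+1) + r) = (i + (r+1)) := by omega
      rw [B_succ_succ, hd, hE] at *
      linear_combination (B t (i + d) i * B t k (i + (r + 1))) * hp
    rw [Finset.sum_range_succ', Finset.sum_congr rfl key, Finset.sum_add_distrib, ← mul_sum,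
      ih (r + 1) k]
    have hg : ∑ i ∈ range (a + 1),
        t ^ ((i+1) * ((i+1) + r)) * B t a (i+1) * B t k ((i+1) + r)
        = B t (a + k) (a + r) - t ^ (0 * (0 + r)) * B t a 0 * B t k (0 + r) := by
      have h2 : ∑ i ∈ range (a + 1 + 1), t ^ (i * (i + r)) * B t a i * B t k (i + r)
          = B t (a + k) (a + r) := by
        rw [Finset.sum_range_succ, ih r k, B_eq_zero (by omega : a < a + 1)]
        simp
      rw [Finset.sum_range_succ'] at h2
      linarith [h2]
    rw [hg]
    simp only [B_zero_right, Nat.zero_mul, pow_zero, one_mul, Nat.zero_add, mul_one]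
    have := B_pascal2 ht0 ht1 (a + k) (a + r)
    rw [show a + 1 + k = a + k + 1 by omega, show a + 1 + r = a + r + 1 by omega,
      show a + (r + 1) = a + r + 1 by omega, this]
    ring

open Multiset in
/-- `∑_{i=1}^N (λ'_i)²` computed from a multiset with cutoff `N`. -/
def cA (M : Multiset ℕ) (N : ℕ) : ℕ :=
  ∑ i ∈ Finset.Icc 1 N, (Multiset.card (M.filter (fun j => i ≤ j))) ^ 2

/-- `∏_{i=1}^N (t;t)_{m_i}` computed from a multiset with cutoff `N`. -/
noncomputable def cP (t : ℝ) (M : Multiset ℕ) (N : ℕ) : ℝ :=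
  ∏ i ∈ Finset.Icc 1 N, E t (M.count i)

/-- boundary weight. -/
noncomputable def gw (t : ℝ) (k c : ℕ) : ℝ := if c ≤ k then (E t (k - c))⁻¹ else 0

/-- the master sum. -/
noncomputable def T (t : ℝ) (m k : ℕ) : ℝ :=
  ∑ μ : Nat.Partition m, gw t k (Multiset.card μ.parts) * t ^ cA μ.parts m / cP t μ.parts m

lemma card_le_sum' {M : Multiset ℕ} (h : ∀ x ∈ M, 1 ≤ x) : Multiset.card M ≤ M.sum := by
  induction M using Multiset.induction_on with
  | empty => simp
  | cons a s ih =>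
    simp only [Multiset.card_cons, Multiset.sum_cons]
    have h1 : 1 ≤ a := h a (Multiset.mem_cons_self a s)
    have h2 := ih (fun x hx => h x (Multiset.mem_cons_of_mem hx))
    omega

lemma sum_map_pred {M : Multiset ℕ} (h : ∀ x ∈ M, 1 ≤ x) :
    (M.map (· - 1)).sum = M.sum - Multiset.card M := by
  induction M using Multiset.induction_on with
  | empty => simp
  | cons a s ih =>
    simp only [Multiset.map_cons, Multiset.sum_cons, Multiset.card_cons]
    have h1 : 1 ≤ a := h a (Multiset.mem_cons_self a s)
    have h2 := ih (fun x hx => h x (Multiset.mem_cons_of_mem hx))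
    have h3 := card_le_sum' (fun x hx => h x (Multiset.mem_cons_of_mem hx))
    omega

lemma cA_stab {M : Multiset ℕ} {N N' : ℕ} (hN : ∀ x ∈ M, x ≤ N) (h : N ≤ N') :
    cA M N' = cA M N := by
  unfold cA
  rw [← Finset.sum_subset (Finset.Icc_subset_Icc_right h)]
  intro i hi hni
  have hiN : N < i := by
    simp only [Finset.mem_Icc] at hi hni; omega
  have : M.filter (fun j => i ≤ j) = 0 := by
    rw [Multiset.filter_eq_nil]
    intro x hx
    have := hN x hx; omega
  rw [this]; simp

lemma cP_stab {t : ℝ} {M : Multiset ℕ} {N N' : ℕ} (hN : ∀ x ∈ M, x ≤ N) (h : N ≤ N') :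
    cP t M N' = cP t M N := by
  unfold cP
  rw [← Finset.prod_subset (Finset.Icc_subset_Icc_right h)]
  intro i hi hni
  have hiN : N < i := by
    simp only [Finset.mem_Icc] at hi hni; omega
  have : M.count i = 0 := by
    rw [Multiset.count_eq_zero]
    intro hx
    have := hN i hx; omega
  rw [this, E_zero]

/-- remove the first column: subtract 1 from every part, drop zeros. -/
def colD (M : Multiset ℕ) : Multiset ℕ := (M.map (· - 1)).filter (· ≠ 0)

lemma count_eq_card_filter (M : Multiset ℕ) (b : ℕ) :
    M.count b = Multiset.card (M.filter (fun x => x = b)) := by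
  rw [Multiset.count, Multiset.countP_eq_card_filter]
  congr 1
  exact Multiset.filter_congr (fun x _ => eq_comm)

lemma colD_eq (M : Multiset ℕ) : colD M = (M.filter (fun x => 2 ≤ x)).map (· - 1) := by
  unfold colD
  rw [Multiset.filter_map]
  congr 1
  exact Multiset.filter_congr (fun x _ => by simp only [Function.comp_apply]; omega)

lemma colD_card (M : Multiset ℕ) :
    Multiset.card (colD M) = Multiset.card (M.filter (fun x => 2 ≤ x)) := by
  rw [colD_eq, Multiset.card_map]

lemma colD_card_le (M : Multiset ℕ) : Multiset.card (colD M) ≤ Multiset.card M := by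
  rw [colD_card]
  exact Multiset.card_le_card (Multiset.filter_le _ M)

lemma colD_filter_card (M : Multiset ℕ) {i : ℕ} (hi : 1 ≤ i) :
    Multiset.card ((colD M).filter (fun j => i ≤ j))
      = Multiset.card (M.filter (fun j => i + 1 ≤ j)) := by
  rw [colD_eq, Multiset.filter_map, Multiset.card_map, Multiset.filter_filter]
  congr 1
  exact Multiset.filter_congr (fun x _ => by simp only [Function.comp_apply]; omega)

lemma colD_count (M : Multiset ℕ) {i : ℕ} (hi : 1 ≤ i) :
    (colD M).count i = M.count (i + 1) := by
  rw [colD_eq, count_eq_card_filter, Multiset.filter_map, Multiset.card_map,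
    Multiset.filter_filter, count_eq_card_filter]
  congr 1
  exact Multiset.filter_congr (fun x _ => by simp only [Function.comp_apply]; omega)

lemma sum_filter_ne_zero' (M : Multiset ℕ) : (M.filter (· ≠ 0)).sum = M.sum := by
  conv_rhs => rw [← Multiset.filter_add_not (· ≠ 0) M, Multiset.sum_add]
  have h : (M.filter (fun x => ¬ x ≠ 0)).sum = 0 :=
    Multiset.sum_eq_zero (fun x hx => by simpa using Multiset.of_mem_filter hx)
  omega

lemma colD_sum {M : Multiset ℕ} (hpos : ∀ x ∈ M, 0 < x) :
    (colD M).sum = M.sum - Multiset.card M := by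
  unfold colD
  rw [sum_filter_ne_zero', sum_map_pred (fun x hx => hpos x hx)]

lemma count_one_add_colD {M : Multiset ℕ} (hpos : ∀ x ∈ M, 0 < x) :
    M.count 1 + Multiset.card (colD M) = Multiset.card M := by
  rw [colD_card, count_eq_card_filter]
  have h1 : M.filter (fun x => x = 1) = M.filter (fun x => ¬ 2 ≤ x) :=
    Multiset.filter_congr (fun x hx => by have := hpos x hx; omega)
  rw [h1]
  rw [← Multiset.card_add, add_comm, Multiset.filter_add_not]

lemma colD_left_inv {M : Multiset ℕ} {j : ℕ} (hpos : ∀ x ∈ M, 0 < x)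
    (hcard : Multiset.card M = j) :
    (colD M).map (· + 1) + Multiset.replicate (j - Multiset.card (colD M)) 1 = M := by
  have h1 : (colD M).map (· + 1) = M.filter (fun x => 2 ≤ x) := by
    rw [colD_eq, Multiset.map_map]
    calc (M.filter (fun x => 2 ≤ x)).map ((· + 1) ∘ (· - 1))
        = (M.filter (fun x => 2 ≤ x)).map id := Multiset.map_congr rfl
          (fun x hx => by have := Multiset.of_mem_filter hx; simp; omega)
      _ = M.filter (fun x => 2 ≤ x) := Multiset.map_id _
  have h2 : j - Multiset.card (colD M) = M.count 1 := by
    have := count_one_add_colD hpos; omega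
  have h3 : Multiset.replicate (M.count 1) 1 = M.filter (fun x => x = 1) := by
    have he : M.filter (fun x => x = 1) = M.filter (Eq 1) :=
      Multiset.filter_congr (fun x _ => eq_comm)
    rw [he, Multiset.filter_eq]
  have h4 : M.filter (fun x => x = 1) = M.filter (fun x => ¬ 2 ≤ x) :=
    Multiset.filter_congr (fun x hx => by have := hpos x hx; omega)
  rw [h1, h2, h3, h4, Multiset.filter_add_not]

lemma colD_right_inv {μ : Multiset ℕ} (hpos : ∀ x ∈ μ, 0 < x) (s : ℕ) :
    colD (μ.map (· + 1) + Multiset.replicate s 1) = μ := by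
  unfold colD
  rw [Multiset.map_add, Multiset.map_map, Multiset.map_replicate, Multiset.filter_add]
  have h1 : μ.map ((· - 1) ∘ (· + 1)) = μ := by
    calc μ.map ((· - 1) ∘ (· + 1)) = μ.map id := Multiset.map_congr rfl (fun x _ => by simp)
      _ = μ := Multiset.map_id _
  have h2 : (1 : ℕ) - 1 = 0 := rfl
  rw [h1, h2]
  have h3 : μ.filter (· ≠ 0) = μ :=
    Multiset.filter_eq_self.mpr (fun x hx => (hpos x hx).ne')
  have h4 : (Multiset.replicate s (0:ℕ)).filter (· ≠ 0) = 0 := by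
    rw [Multiset.filter_eq_nil]
    intro x hx
    rw [Multiset.eq_of_mem_replicate hx]
    simp
  rw [h3, h4, add_zero]

lemma Icc_one_eq_insert (m : ℕ) (hm : 1 ≤ m) :
    Finset.Icc 1 m = insert 1 (Finset.Icc 2 m) := by
  ext a; simp only [Finset.mem_Icc, Finset.mem_insert]; omega

lemma Icc_two_eq_image (m : ℕ) :
    Finset.Icc 2 m = Finset.image (· + 1) (Finset.Icc 1 (m - 1)) := by
  ext a
  simp only [Finset.mem_Icc, Finset.mem_image]
  constructor
  · intro h; exact ⟨a - 1, by omega, by omega⟩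
  · rintro ⟨b, hb, rfl⟩; omega

lemma sum_Icc_split (f : ℕ → ℕ) (m : ℕ) (hm : 1 ≤ m) :
    ∑ i ∈ Finset.Icc 1 m, f i = f 1 + ∑ i ∈ Finset.Icc 1 (m - 1), f (i + 1) := by
  rw [Icc_one_eq_insert m hm, Finset.sum_insert (by simp), Icc_two_eq_image m,
    Finset.sum_image (fun x _ y _ h => by omega)]

lemma prod_Icc_split (f : ℕ → ℝ) (m : ℕ) (hm : 1 ≤ m) :
    ∏ i ∈ Finset.Icc 1 m, f i = f 1 * ∏ i ∈ Finset.Icc 1 (m - 1), f (i + 1) := by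
  rw [Icc_one_eq_insert m hm, Finset.prod_insert (by simp), Icc_two_eq_image m,
    Finset.prod_image (fun x _ y _ h => by omega)]

lemma cA_split {M : Multiset ℕ} {m j : ℕ} (hpos : ∀ x ∈ M, 0 < x) (hsum : M.sum = m)
    (hcard : Multiset.card M = j) (hj : 1 ≤ j) :
    cA M m = j ^ 2 + cA (colD M) (m - j) := by
  have hm : 1 ≤ m := by
    have := card_le_sum' (fun x hx => hpos x hx); omega
  unfold cA
  rw [sum_Icc_split _ m hm]
  have h1 : M.filter (fun x => 1 ≤ x) = M := Multiset.filter_eq_self.mpr (fun x hx => hpos x hx)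
  have hD : ∀ x ∈ colD M, x ≤ m - j := by
    intro x hx
    have h := Multiset.le_sum_of_mem hx
    rw [colD_sum hpos, hsum, hcard] at h
    exact h
  have h2 : ∑ i ∈ Finset.Icc 1 (m - 1), (Multiset.card (M.filter (fun x => i + 1 ≤ x))) ^ 2
      = cA (colD M) (m - j) := by
    rw [← cA_stab (N := m - j) (N' := m - 1) hD (by omega)]
    unfold cA
    refine Finset.sum_congr rfl (fun i hi => ?_)
    have hi1 : 1 ≤ i := (Finset.mem_Icc.mp hi).1
    rw [colD_filter_card M hi1]
  rw [h1, hcard, h2]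
  rfl

lemma cP_split {t : ℝ} {M : Multiset ℕ} {m j : ℕ} (hpos : ∀ x ∈ M, 0 < x) (hsum : M.sum = m)
    (hcard : Multiset.card M = j) (hj : 1 ≤ j) :
    cP t M m = E t (j - Multiset.card (colD M)) * cP t (colD M) (m - j) := by
  have hm : 1 ≤ m := by
    have := card_le_sum' (fun x hx => hpos x hx); omega
  unfold cP
  rw [prod_Icc_split _ m hm]
  have hc1 : M.count 1 = j - Multiset.card (colD M) := by
    have := count_one_add_colD hpos; omega
  have hD : ∀ x ∈ colD M, x ≤ m - j := by
    intro x hx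
    have h := Multiset.le_sum_of_mem hx
    rw [colD_sum hpos, hsum, hcard] at h
    exact h
  have h2 : ∏ i ∈ Finset.Icc 1 (m - 1), E t (M.count (i + 1))
      = cP t (colD M) (m - j) := by
    rw [← cP_stab (N := m - j) (N' := m - 1) hD (by omega)]
    unfold cP
    refine Finset.prod_congr rfl (fun i hi => ?_)
    have hi1 : 1 ≤ i := (Finset.mem_Icc.mp hi).1
    rw [colD_count M hi1]
  rw [hc1, h2]
  rfl

lemma sum_map_succ (M : Multiset ℕ) : (M.map (· + 1)).sum = M.sum + Multiset.card M := by
  induction M using Multiset.induction_on with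
  | empty => simp
  | cons a s ih =>
    simp only [Multiset.map_cons, Multiset.sum_cons, Multiset.card_cons, ih]
    omega

include ht0 ht1 in
lemma cP_pos (M : Multiset ℕ) (N : ℕ) : 0 < cP t M N :=
  Finset.prod_pos (fun i _ => E_pos ht0 ht1 _)

/-- remove the first column of a partition. -/
def downP {m j : ℕ} (p : Nat.Partition m) (hcard : Multiset.card p.parts = j) :
    Nat.Partition (m - j) where
  parts := colD p.parts
  parts_pos := by
    intro x hx
    unfold colD at hx
    have : x ≠ 0 := by
      have := Multiset.mem_filter.mp hx
      exact this.2
    exact Nat.pos_of_ne_zero this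
  parts_sum := by
    rw [colD_sum (fun x hx => p.parts_pos hx), p.parts_sum, hcard]

/-- add a first column of height `j` to a partition. -/
def upP {m j : ℕ} (hjm : j ≤ m) (μ : Nat.Partition (m - j))
    (hcard : Multiset.card μ.parts ≤ j) : Nat.Partition m where
  parts := μ.parts.map (· + 1) + Multiset.replicate (j - Multiset.card μ.parts) 1
  parts_pos := by
    intro x hx
    rcases Multiset.mem_add.mp hx with h | h
    · obtain ⟨y, _, rfl⟩ := Multiset.mem_map.mp h
      omega
    · rw [Multiset.eq_of_mem_replicate h]; norm_num
  parts_sum := by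
    rw [Multiset.sum_add, Multiset.sum_replicate, smul_eq_mul, mul_one, sum_map_succ,
      μ.parts_sum]
    omega

@[simp] lemma downP_parts {m j : ℕ} (p : Nat.Partition m) (hcard : Multiset.card p.parts = j) :
    (downP p hcard).parts = colD p.parts := rfl

@[simp] lemma upP_parts {m j : ℕ} (hjm : j ≤ m) (μ : Nat.Partition (m - j))
    (hcard : Multiset.card μ.parts ≤ j) :
    (upP hjm μ hcard).parts
      = μ.parts.map (· + 1) + Multiset.replicate (j - Multiset.card μ.parts) 1 := rfl

include ht0 ht1 in
lemma fiber_eq {m j : ℕ} (hj : 1 ≤ j) (hjm : j ≤ m) :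
    ∑ p ∈ Finset.univ.filter (fun p : Nat.Partition m => Multiset.card p.parts = j),
      t ^ cA p.parts m / cP t p.parts m
    = t ^ (j ^ 2) * T t (m - j) j := by
  have step1 : T t (m - j) j = ∑ μ ∈ Finset.univ.filter
      (fun μ : Nat.Partition (m - j) => Multiset.card μ.parts ≤ j),
      (E t (j - Multiset.card μ.parts))⁻¹ * t ^ cA μ.parts (m - j) / cP t μ.parts (m - j) := by
    unfold T
    calc ∑ μ : Nat.Partition (m - j),
          gw t j (Multiset.card μ.parts) * t ^ cA μ.parts (m - j) / cP t μ.parts (m - j)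
        = ∑ μ : Nat.Partition (m - j), (if Multiset.card μ.parts ≤ j then
            (E t (j - Multiset.card μ.parts))⁻¹ * t ^ cA μ.parts (m - j) / cP t μ.parts (m - j)
            else 0) := by
          refine Finset.sum_congr rfl (fun μ _ => ?_)
          rw [gw]
          split
          · rfl
          · rw [zero_mul, zero_div]
      _ = _ := (Finset.sum_filter _ _).symm
  rw [step1, Finset.mul_sum]
  refine Finset.sum_bij' (fun p hp => downP p (Finset.mem_filter.mp hp).2)
    (fun μ hμ => upP hjm μ (Finset.mem_filter.mp hμ).2) ?_ ?_ ?_ ?_ ?_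
  · intro p hp
    refine Finset.mem_filter.mpr ⟨Finset.mem_univ _, ?_⟩
    have hcard : Multiset.card p.parts = j := (Finset.mem_filter.mp hp).2
    show Multiset.card (colD p.parts) ≤ j
    exact (colD_card_le p.parts).trans_eq hcard
  · intro μ hμ
    refine Finset.mem_filter.mpr ⟨Finset.mem_univ _, ?_⟩
    have hcard : Multiset.card μ.parts ≤ j := (Finset.mem_filter.mp hμ).2
    show Multiset.card (μ.parts.map (· + 1) + Multiset.replicate (j - Multiset.card μ.parts) 1) = j
    simp only [Multiset.card_add, Multiset.card_map, Multiset.card_replicate]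
    omega
  · intro p hp
    have hcard : Multiset.card p.parts = j := (Finset.mem_filter.mp hp).2
    apply Nat.Partition.ext
    show (colD p.parts).map (· + 1) +
        Multiset.replicate (j - Multiset.card (colD p.parts)) 1 = p.parts
    exact colD_left_inv (fun x hx => p.parts_pos hx) hcard
  · intro μ hμ
    apply Nat.Partition.ext
    show colD (μ.parts.map (· + 1) + Multiset.replicate (j - Multiset.card μ.parts) 1) = μ.parts
    exact colD_right_inv (fun x hx => μ.parts_pos hx) _
  · intro p hp
    have hcard : Multiset.card p.parts = j := (Finset.mem_filter.mp hp).2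
    have hpos : ∀ x ∈ p.parts, 0 < x := fun x hx => p.parts_pos hx
    show t ^ cA p.parts m / cP t p.parts m = t ^ j ^ 2 *
      ((E t (j - Multiset.card (colD p.parts)))⁻¹ *
        t ^ cA (colD p.parts) (m - j) / cP t (colD p.parts) (m - j))
    rw [cA_split hpos p.parts_sum hcard hj, cP_split hpos p.parts_sum hcard hj,
      pow_add, div_eq_mul_inv, div_eq_mul_inv, mul_inv]
    ring

include ht0 ht1 in
lemma G_lemma (g : ℕ → ℝ) {m : ℕ} (hm : 1 ≤ m) :
    ∑ p : Nat.Partition m, g (Multiset.card p.parts) * t ^ cA p.parts m / cP t p.parts m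
    = ∑ j ∈ Finset.Icc 1 m, g j * t ^ (j ^ 2) * T t (m - j) j := by
  have hmaps : ∀ p ∈ (Finset.univ : Finset (Nat.Partition m)),
      Multiset.card p.parts ∈ Finset.Icc 1 m := by
    intro p _
    rw [Finset.mem_Icc]
    constructor
    · rw [Nat.one_le_iff_ne_zero]
      intro h0
      have h1 : p.parts = 0 := Multiset.card_eq_zero.mp h0
      have h2 := p.parts_sum
      rw [h1] at h2
      simp at h2
      omega
    · calc Multiset.card p.parts ≤ p.parts.sum := card_le_sum' (fun x hx => p.parts_pos hx)
        _ = m := p.parts_sum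
  rw [← Finset.sum_fiberwise_of_maps_to hmaps]
  refine Finset.sum_congr rfl (fun j hj => ?_)
  obtain ⟨hj1, hjm⟩ := Finset.mem_Icc.mp hj
  calc ∑ p ∈ Finset.univ.filter (fun p : Nat.Partition m => Multiset.card p.parts = j),
        g (Multiset.card p.parts) * t ^ cA p.parts m / cP t p.parts m
      = ∑ p ∈ Finset.univ.filter (fun p : Nat.Partition m => Multiset.card p.parts = j),
        g j * (t ^ cA p.parts m / cP t p.parts m) := by
        refine Finset.sum_congr rfl (fun p hp => ?_)
        rw [(Finset.mem_filter.mp hp).2, mul_div_assoc]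
    _ = g j * ∑ p ∈ Finset.univ.filter (fun p : Nat.Partition m => Multiset.card p.parts = j),
        t ^ cA p.parts m / cP t p.parts m := by rw [Finset.mul_sum]
    _ = g j * (t ^ (j ^ 2) * T t (m - j) j) := by rw [fiber_eq ht0 ht1 hj1 hjm]
    _ = g j * t ^ (j ^ 2) * T t (m - j) j := by ring

include ht0 ht1 in
lemma key_term {m k i : ℕ} (hm : 1 ≤ m) (hi : i < m) :
    gw t k (1 + i) * t ^ ((1 + i) ^ 2) * (t ^ (m - (1 + i)) * B t (m - 1) (m - (1 + i)) / E t (1 + i))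
    = t ^ m / E t k * (t ^ (i * (i + 1)) * B t (m - 1) i * B t k (i + 1)) := by
  have hs : m - (1 + i) = m - 1 - i := by omega
  have hB : B t (m - 1) (m - 1 - i) = B t (m - 1) i :=
    (B_symm ht0 ht1 (show i ≤ m - 1 by omega)).symm
  have hexp : (1 + i) ^ 2 + (m - (1 + i)) = m + i * (i + 1) := by
    obtain ⟨d, rfl⟩ : ∃ d, m = (1 + i) + d := ⟨m - (1 + i), by omega⟩
    rw [Nat.add_sub_cancel_left]
    ring
  have hp2 : t ^ ((1 + i) ^ 2) * t ^ (m - (1 + i)) = t ^ m * t ^ (i * (i + 1)) := by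
    rw [← pow_add, ← pow_add, hexp]
  rw [hs, hB, ← hs]
  rcases le_or_gt (1 + i) k with hik | hik
  · rw [gw, if_pos hik, B_closed ht0 ht1 (show i + 1 ≤ k by omega)]
    have hX := E_ne ht0 ht1 (i + 1)
    have hY := E_ne ht0 ht1 (k - (i + 1))
    have hZ := E_ne ht0 ht1 k
    have hY' : E t (k - (1 + i)) ≠ 0 := by rw [show k - (1 + i) = k - (i + 1) by omega]; exact hY
    rw [show (1 : ℕ) + i = i + 1 by omega] at *
    field_simp
    linear_combination (B t (m - 1) i) * hp2
  · rw [gw, if_neg (by omega), B_eq_zero (show k < i + 1 by omega)]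
    simp

include ht0 ht1 in
lemma key_id (m k : ℕ) (hm : 1 ≤ m) :
    ∑ j ∈ Finset.Icc 1 m, gw t k j * t ^ (j ^ 2) * (t ^ (m - j) * B t (m - 1) (m - j) / E t j)
    = t ^ m * B t (m + k - 1) m / E t k := by
  rw [← Finset.Ico_add_one_right_eq_Icc, Finset.sum_Ico_eq_sum_range]
  have hr : m + 1 - 1 = m := by omega
  rw [hr]
  have hV := V_id ht0 ht1 (m - 1) 1 k
  rw [show m - 1 + 1 = m by omega, show m - 1 + k = m + k - 1 by omega] at hV
  calc ∑ i ∈ Finset.range m,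
        gw t k (1 + i) * t ^ ((1 + i) ^ 2) * (t ^ (m - (1 + i)) * B t (m - 1) (m - (1 + i)) / E t (1 + i))
      = ∑ i ∈ Finset.range m, t ^ m / E t k * (t ^ (i * (i + 1)) * B t (m - 1) i * B t k (i + 1)) := by
        refine Finset.sum_congr rfl (fun i hi => ?_)
        exact key_term ht0 ht1 hm (Finset.mem_range.mp hi)
    _ = t ^ m / E t k * ∑ i ∈ Finset.range m, t ^ (i * (i + 1)) * B t (m - 1) i * B t k (i + 1) := by
        rw [Finset.mul_sum]
    _ = t ^ m / E t k * B t (m + k - 1) m := by rw [hV]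
    _ = t ^ m * B t (m + k - 1) m / E t k := by ring

include ht0 ht1 in
lemma T_closed : ∀ m k, T t m k = t ^ m * B t (m + k - 1) m / E t k := by
  intro m
  induction m using Nat.strong_induction_on with
  | _ m ih =>
    intro k
    rcases Nat.eq_zero_or_pos m with rfl | hm
    · unfold T
      rw [Fintype.sum_unique]
      have h0 : (default : Nat.Partition 0).parts = 0 := by simp
      rw [h0]
      simp only [Multiset.card_zero, pow_zero, B_zero_right]
      rw [gw, if_pos (Nat.zero_le k), Nat.sub_zero]
      unfold cA cP
      simp [E_zero]
    · have hG := G_lemma ht0 ht1 (gw t k) hm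
      have hsum : ∀ j ∈ Finset.Icc 1 m, gw t k j * t ^ (j ^ 2) * T t (m - j) j
          = gw t k j * t ^ (j ^ 2) * (t ^ (m - j) * B t (m - 1) (m - j) / E t j) := by
        intro j hj
        obtain ⟨hj1, hjm⟩ := Finset.mem_Icc.mp hj
        rw [ih (m - j) (by omega) j, show m - j + j - 1 = m - 1 by omega]
      calc T t m k = ∑ p : Nat.Partition m,
            gw t k (Multiset.card p.parts) * t ^ cA p.parts m / cP t p.parts m := rfl
        _ = ∑ j ∈ Finset.Icc 1 m, gw t k j * t ^ (j ^ 2) * T t (m - j) j := hG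
        _ = ∑ j ∈ Finset.Icc 1 m,
            gw t k j * t ^ (j ^ 2) * (t ^ (m - j) * B t (m - 1) (m - j) / E t j) :=
            Finset.sum_congr rfl hsum
        _ = t ^ m * B t (m + k - 1) m / E t k := key_id ht0 ht1 m k hm

include ht0 ht1 in
lemma final_term {n i : ℕ} (hi : i < n) :
    (1:ℝ) * t ^ ((1 + i) ^ 2) * (t ^ (n - (1 + i)) * B t (n - 1) (n - (1 + i)) / E t (1 + i))
    = t ^ n * (t ^ (i * (i + 1)) * B t (n - 1) i / E t (i + 1)) := by
  have hs : n - (1 + i) = n - 1 - i := by omega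
  have hB : B t (n - 1) (n - 1 - i) = B t (n - 1) i :=
    (B_symm ht0 ht1 (show i ≤ n - 1 by omega)).symm
  have hexp : (1 + i) ^ 2 + (n - (1 + i)) = n + i * (i + 1) := by
    obtain ⟨d, rfl⟩ : ∃ d, n = (1 + i) + d := ⟨n - (1 + i), by omega⟩
    rw [Nat.add_sub_cancel_left]
    ring
  have hp2 : t ^ ((1 + i) ^ 2) * t ^ (n - (1 + i)) = t ^ n * t ^ (i * (i + 1)) := by
    rw [← pow_add, ← pow_add, hexp]
  rw [hs, hB, ← hs, one_mul, show (1 : ℕ) + i = i + 1 by omega] at *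
  linear_combination (B t (n - 1) i / E t (i + 1)) * hp2

include ht0 ht1 in
lemma final_id (n : ℕ) (hn : 1 ≤ n) :
    ∑ j ∈ Finset.Icc 1 n, (1:ℝ) * t ^ (j ^ 2) * (t ^ (n - j) * B t (n - 1) (n - j) / E t j)
    = t ^ n / E t n := by
  rw [← Finset.Ico_add_one_right_eq_Icc, Finset.sum_Ico_eq_sum_range, show n + 1 - 1 = n by omega]
  have hW := W_id ht0 ht1 (n - 1) 1
  rw [show n - 1 + 1 = n by omega] at hW
  calc ∑ i ∈ Finset.range n,
        (1:ℝ) * t ^ ((1 + i) ^ 2) * (t ^ (n - (1 + i)) * B t (n - 1) (n - (1 + i)) / E t (1 + i))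
      = ∑ i ∈ Finset.range n, t ^ n * (t ^ (i * (i + 1)) * B t (n - 1) i / E t (i + 1)) :=
        Finset.sum_congr rfl (fun i hi => final_term ht0 ht1 (Finset.mem_range.mp hi))
    _ = t ^ n * ∑ i ∈ Finset.range n, t ^ (i * (i + 1)) * B t (n - 1) i / E t (i + 1) := by
        rw [Finset.mul_sum]
    _ = t ^ n * (1 / E t n) := by rw [hW]
    _ = t ^ n / E t n := by ring

end Aux

/-- For a prime power `q` and `n ≥ 1`,
`∑_{λ ⊢ n} 1/(q^{∑ᵢ (λ'ᵢ)²} ∏ᵢ (1/q)_{mᵢ(λ)}) = q^{n(n−1)}/|GL(n,q)|`,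
where `|GL(n,q)| = ∏_{i=0}^{n−1}(qⁿ − qⁱ)`. -/
theorem sum_partitions_eq_unipotent_proportion (q : ℕ) (hq : IsPrimePow q) (n : ℕ)
    (hn : 1 ≤ n) :
    ∑ lam : Nat.Partition n,
        (1 : ℝ) /
          ((q : ℝ) ^ (∑ i ∈ Finset.Icc 1 n, (conjPart lam i) ^ 2) *
            ∏ i ∈ Finset.Icc 1 n, qPoch (q : ℝ) 1 (Multiset.count i lam.parts)) =
      (q : ℝ) ^ (n * (n - 1)) / ∏ i ∈ Finset.range n, ((q : ℝ) ^ n - (q : ℝ) ^ i) := by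
  have hq1 : 1 < q := hq.one_lt
  have hqR : (1:ℝ) < (q:ℝ) := by exact_mod_cast hq1
  have hq0 : (0:ℝ) < (q:ℝ) := by linarith
  have hqne : (q:ℝ) ≠ 0 := ne_of_gt hq0
  set t : ℝ := (q:ℝ)⁻¹ with hT
  have ht0 : 0 < t := inv_pos.mpr hq0
  have ht1 : t < 1 := by rw [hT, inv_lt_one_iff₀]; right; exact hqR
  have hsummand : ∀ lam : Nat.Partition n,
      (1:ℝ) / ((q:ℝ) ^ (∑ i ∈ Finset.Icc 1 n, (conjPart lam i) ^ 2) *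
        ∏ i ∈ Finset.Icc 1 n, qPoch (q:ℝ) 1 (Multiset.count i lam.parts))
      = (1:ℝ) * t ^ cA lam.parts n / cP t lam.parts n := by
    intro lam
    have h1 : ∑ i ∈ Finset.Icc 1 n, (conjPart lam i) ^ 2 = cA lam.parts n := rfl
    have h2 : ∏ i ∈ Finset.Icc 1 n, qPoch (q:ℝ) 1 (Multiset.count i lam.parts)
        = cP t lam.parts n := by
      unfold qPoch cP
      refine Finset.prod_congr rfl (fun i _ => ?_)
      show _ = ∏ j ∈ Finset.range (Multiset.count i lam.parts), (1 - t ^ (j + 1))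
      exact Finset.prod_congr rfl (fun j _ => by rw [one_mul])
    have h3 : t ^ cA lam.parts n = ((q:ℝ) ^ cA lam.parts n)⁻¹ := by rw [hT, inv_pow]
    rw [h1, h2, one_mul, h3, one_div, mul_inv, div_eq_mul_inv]
  have hprod : ∏ i ∈ Finset.range n, ((q:ℝ)^n - (q:ℝ)^i) = (q:ℝ)^(n*n) * E t n := by
    have h1 : ∀ i ∈ Finset.range n, ((q:ℝ)^n - (q:ℝ)^i) = (q:ℝ)^n * (1 - t^(n-i)) := by
      intro i hi
      have hin : i < n := Finset.mem_range.mp hi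
      have hpow : (q:ℝ)^i * (q:ℝ)^(n-i) = (q:ℝ)^n := by
        rw [← pow_add]; congr 1; omega
      have hqi : (q:ℝ)^n * t^(n-i) = (q:ℝ)^i := by
        rw [hT, inv_pow, mul_inv_eq_iff_eq_mul₀ (pow_ne_zero _ hqne)]
        exact hpow.symm
      rw [mul_sub, mul_one, hqi]
    rw [Finset.prod_congr rfl h1, Finset.prod_mul_distrib, Finset.prod_const, ← pow_mul]
    congr 1
    · rw [Finset.card_range]
    · show ∏ i ∈ Finset.range n, (1 - t^(n-i)) = ∏ j ∈ Finset.range n, (1 - t^(j+1))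
      rw [← Finset.prod_range_reflect (fun j => 1 - t^(j+1)) n]
      exact Finset.prod_congr rfl (fun i hi => by
        rw [show n - 1 - i + 1 = n - i from by have := Finset.mem_range.mp hi; omega])
  have hq2 : (q:ℝ)^(n*n) = (q:ℝ)^(n*(n-1)) * (q:ℝ)^n := by
    rw [← pow_add]
    congr 1
    obtain ⟨n', rfl⟩ : ∃ n', n = n' + 1 := ⟨n - 1, by omega⟩
    rw [Nat.add_sub_cancel]
    ring
  calc ∑ lam : Nat.Partition n,
        (1:ℝ) / ((q:ℝ) ^ (∑ i ∈ Finset.Icc 1 n, (conjPart lam i) ^ 2) *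
          ∏ i ∈ Finset.Icc 1 n, qPoch (q:ℝ) 1 (Multiset.count i lam.parts))
      = ∑ p : Nat.Partition n,
          (fun _ : ℕ => (1:ℝ)) (Multiset.card p.parts) * t ^ cA p.parts n / cP t p.parts n :=
        Finset.sum_congr rfl (fun lam _ => hsummand lam)
    _ = ∑ j ∈ Finset.Icc 1 n, (fun _ : ℕ => (1:ℝ)) j * t ^ (j ^ 2) * T t (n - j) j :=
        G_lemma ht0 ht1 (fun _ => (1:ℝ)) hn
    _ = ∑ j ∈ Finset.Icc 1 n,
          (1:ℝ) * t ^ (j ^ 2) * (t ^ (n - j) * B t (n - 1) (n - j) / E t j) := by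
        refine Finset.sum_congr rfl (fun j hj => ?_)
        obtain ⟨hj1, hjn⟩ := Finset.mem_Icc.mp hj
        rw [T_closed ht0 ht1 (n - j) j, show n - j + j - 1 = n - 1 by omega]
    _ = t ^ n / E t n := final_id ht0 ht1 n hn
    _ = (q:ℝ) ^ (n * (n - 1)) / ∏ i ∈ Finset.range n, ((q:ℝ) ^ n - (q:ℝ) ^ i) := by
        rw [hprod, hq2]
        have hE := E_ne ht0 ht1 n
        have hqn : ((q:ℝ)^n) ≠ 0 := pow_ne_zero _ hqne
        have hqn1 : ((q:ℝ)^(n*(n-1))) ≠ 0 := pow_ne_zero _ hqne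
        have hTn : t ^ n * (q:ℝ) ^ n = 1 := by
          rw [hT, inv_pow, inv_mul_cancel₀ hqn]
        rw [div_eq_div_iff hE (by exact mul_ne_zero (mul_ne_zero hqn1 hqn) hE)]
        linear_combination ((q:ℝ) ^ (n * (n - 1)) * E t n) * hTn
end

section
/- Let q > 1 and 0 < u < 1 be real numbers. For a partition λ, let λ'_i denote the i-th part of the conjugate partition (with λ'_i = 0 for i exceeding the largest part λ₁ of λ), and define M_{GL,u,q}(λ) = ∏_{r=1}^∞ (1 − u/q^r) · u^{|λ|}/(q^{∑_i (λ'_i)²} ∏_{i≥1} (1/q)_{m_i(λ)}), P(a) = u^a ∏_{r=1}^∞(1 − u/q^r) / (q^{a²} (1/q)_a (u/q)_a), and K(a,b) = u^b (1/q)_a (u/q)_a / (q^{b²} (1/q)_{a−b} (1/q)_b (u/q)_b) for 0 ≤ b ≤ a. Then for every partition λ and every integer L ≥ λ₁, M_{GL,u,q}(λ) = P(λ'_1) · ∏_{i=1}^{L} K(λ'_i, λ'_{i+1}). -/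
/-- The measure `M_{GL,u,q}(λ) = ∏_{r=1}^∞ (1 − u/q^r) · u^{|λ|}/(q^{∑ᵢ(λ'ᵢ)²} ∏ᵢ (1/q)_{mᵢ(λ)})`. -/
noncomputable def MGL (q u : ℝ) {n : ℕ} (lam : Nat.Partition n) : ℝ :=
  (∏' r : ℕ, (1 - u / q ^ (r + 1))) * u ^ n /
    (q ^ (∑ i ∈ Finset.Icc 1 n, (conjPart lam i) ^ 2) *
      ∏ i ∈ Finset.Icc 1 n, qPoch q 1 (Multiset.count i lam.parts))

/-- `P(a) = u^a ∏_{r=1}^∞(1 − u/q^r) / (q^{a²} (1/q)_a (u/q)_a)`. -/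
noncomputable def firstColumnP (q u : ℝ) (a : ℕ) : ℝ :=
  u ^ a * (∏' r : ℕ, (1 - u / q ^ (r + 1))) / (q ^ (a ^ 2) * qPoch q 1 a * qPoch q u a)

/-- The transition probability `K(a,b)` of the Markov chain associated to `M_{GL,u,q}`. -/
noncomputable def markovK (q u : ℝ) (a b : ℕ) : ℝ :=
  u ^ b * qPoch q 1 a * qPoch q u a /
    (q ^ (b ^ 2) * qPoch q 1 (a - b) * qPoch q 1 b * qPoch q u b)

open Finset

noncomputable def columnWeight (q u : ℝ) (a b : ℕ) : ℝ :=
  u ^ a / (q ^ (a ^ 2) * qPoch q 1 (a - b))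

lemma qPoch_zero (q x : ℝ) : qPoch q x 0 = 1 :=
  prod_range_zero _

lemma qPoch_pos {q x : ℝ} (hq : 1 < q) (hx : x ≤ 1) (m : ℕ) : 0 < qPoch q x m := by
  refine prod_pos fun j _ => ?_
  have ht0 : 0 ≤ q⁻¹ ^ (j + 1) := by positivity
  have ht1 : q⁻¹ ^ (j + 1) < 1 :=
    pow_lt_one₀ (by positivity) (inv_lt_one_of_one_lt₀ hq) j.succ_ne_zero
  nlinarith [mul_le_mul_of_nonneg_right hx ht0]

lemma columnWeight_zero_zero (q u : ℝ) : columnWeight q u 0 0 = 1 := by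
  simp [columnWeight, qPoch_zero]

lemma firstColumnP_zero (q u : ℝ) : firstColumnP q u 0 = ∏' r : ℕ, (1 - u / q ^ (r + 1)) := by
  simp [firstColumnP, qPoch_zero]

section conjPart

variable {n : ℕ} (lam : Nat.Partition n)

lemma conjPart_eq_conjPart_succ_add_count (i : ℕ) :
    conjPart lam i = conjPart lam (i + 1) + lam.parts.count i := by
  unfold conjPart
  generalize lam.parts = s
  induction s using Multiset.induction with
  | empty => simp
  | cons a s ih =>
    simp only [Multiset.filter_cons, Multiset.card_add, Multiset.count_cons,
      Nat.add_one_le_iff] at ih ⊢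
    split_ifs <;> simp only [Multiset.card_singleton, Multiset.card_zero] <;> omega

lemma conjPart_eq_zero_of_lt {N i : ℕ} (hN : ∀ j ∈ lam.parts, j ≤ N) (hi : N < i) :
    conjPart lam i = 0 :=
  Multiset.card_eq_zero.mpr <| Multiset.filter_eq_nil.mpr fun j hj => by
    have := hN j hj
    omega

lemma sum_conjPart {N : ℕ} (hN : ∀ j ∈ lam.parts, j ≤ N) :
    ∑ i ∈ Icc 1 N, conjPart lam i = n := by
  refine Eq.trans ?_ lam.parts_sum
  unfold conjPart
  generalize lam.parts = s at hN
  induction s using Multiset.induction with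
  | empty => simp
  | cons a s ih =>
    have hcol : ∑ i ∈ Icc 1 N, (if i ≤ a then 1 else 0) = a := by
      have hfilter : {i ∈ Icc 1 N | i ≤ a} = Icc 1 a := by
        ext i
        simp only [mem_filter, mem_Icc]
        have := hN a (Multiset.mem_cons_self a s)
        omega
      rw [sum_boole, Nat.cast_id, hfilter, Nat.card_Icc, Nat.add_sub_cancel]
    simp only [← Multiset.countP_eq_card_filter, Multiset.countP_cons, sum_add_distrib,
      Multiset.sum_cons] at ih ⊢
    rw [ih fun j hj => hN j (Multiset.mem_cons_of_mem hj), hcol, add_comm]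

lemma prod_Icc_conjPart_eq_of_le {M : Type*} [CommMonoid M] (g : ℕ → ℕ → M) (hg : g 0 0 = 1)
    {N N' : ℕ} (hN : ∀ j ∈ lam.parts, j ≤ N) (hNN' : N ≤ N') :
    ∏ i ∈ Icc 1 N', g (conjPart lam i) (conjPart lam (i + 1)) =
      ∏ i ∈ Icc 1 N, g (conjPart lam i) (conjPart lam (i + 1)) := by
  refine (prod_subset (Icc_subset_Icc_right hNN') fun i hi hi' => ?_).symm
  simp only [mem_Icc] at hi hi'
  rw [conjPart_eq_zero_of_lt lam hN (by omega), conjPart_eq_zero_of_lt lam hN (by omega), hg]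

end conjPart

section telescoping

variable {q u : ℝ}

lemma firstColumnP_mul_markovK (hq : 1 < q) (hu : u ≤ 1) (a b : ℕ) :
    firstColumnP q u a * markovK q u a b = columnWeight q u a b * firstColumnP q u b := by
  have hq0 : q ≠ 0 := by positivity
  have hP1 (m : ℕ) : qPoch q 1 m ≠ 0 := (qPoch_pos hq le_rfl m).ne'
  have hPu (m : ℕ) : qPoch q u m ≠ 0 := (qPoch_pos hq hu m).ne'
  have := hP1 a; have := hP1 b; have := hP1 (a - b); have := hPu a; have := hPu b
  unfold firstColumnP markovK columnWeight
  field_simp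

lemma firstColumnP_mul_prod_markovK (hq : 1 < q) (hu : u ≤ 1) (a : ℕ → ℕ) (N : ℕ) :
    firstColumnP q u (a 1) * ∏ i ∈ Icc 1 N, markovK q u (a i) (a (i + 1)) =
      (∏ i ∈ Icc 1 N, columnWeight q u (a i) (a (i + 1))) * firstColumnP q u (a (N + 1)) := by
  induction N with
  | zero => simp
  | succ N ih =>
    rw [prod_Icc_succ_top (by omega), prod_Icc_succ_top (by omega), ← mul_assoc, ih, mul_assoc,
      firstColumnP_mul_markovK hq hu, mul_assoc]

end telescoping

lemma MGL_eq_tprod_mul_prod_columnWeight (q u : ℝ) {n : ℕ} (lam : Nat.Partition n) :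
    MGL q u lam = (∏' r : ℕ, (1 - u / q ^ (r + 1))) *
      ∏ i ∈ Icc 1 n, columnWeight q u (conjPart lam i) (conjPart lam (i + 1)) := by
  have hcount (i : ℕ) : lam.parts.count i = conjPart lam i - conjPart lam (i + 1) := by
    have := conjPart_eq_conjPart_succ_add_count lam i
    omega
  have hu : u ^ n = u ^ ∑ i ∈ Icc 1 n, conjPart lam i := by
    rw [sum_conjPart lam fun j => lam.le_of_mem_parts]
  simp only [MGL, columnWeight, prod_div_distrib, prod_mul_distrib, prod_pow_eq_pow_sum, hcount,
    hu, mul_div_assoc]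

theorem MGL_eq_markov_chain_general (q u : ℝ) (hq : 1 < q) (hu1 : u < 1)
    {n : ℕ} (lam : Nat.Partition n) (L : ℕ) (hL : ∀ j ∈ lam.parts, j ≤ L) :
    MGL q u lam =
      firstColumnP q u (conjPart lam 1) *
        ∏ i ∈ Finset.Icc 1 L, markovK q u (conjPart lam i) (conjPart lam (i + 1)) := by
  have hmin : ∀ j ∈ lam.parts, j ≤ min L n := fun j hj =>
    le_min (hL j hj) (lam.le_of_mem_parts hj)
  rw [firstColumnP_mul_prod_markovK hq hu1.le, conjPart_eq_zero_of_lt lam hL L.lt_succ_self,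
    firstColumnP_zero, MGL_eq_tprod_mul_prod_columnWeight, mul_comm,
    prod_Icc_conjPart_eq_of_le lam _ (columnWeight_zero_zero q u) hmin (min_le_left L n),
    prod_Icc_conjPart_eq_of_le lam _ (columnWeight_zero_zero q u) hmin (min_le_right L n)]

/-- For `q > 1`, `0 < u < 1`, any partition `λ` and any `L` at least the largest part of `λ`,
`M_{GL,u,q}(λ) = P(λ'₁) · ∏_{i=1}^{L} K(λ'ᵢ, λ'_{i+1})`. -/
theorem MGL_eq_markov_chain (q u : ℝ) (hq : 1 < q) (hu0 : 0 < u) (hu1 : u < 1)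
    {n : ℕ} (lam : Nat.Partition n) (L : ℕ) (hL : ∀ j ∈ lam.parts, j ≤ L) :
    MGL q u lam =
      firstColumnP q u (conjPart lam 1) *
        ∏ i ∈ Finset.Icc 1 L, markovK q u (conjPart lam i) (conjPart lam (i + 1)) :=
  MGL_eq_markov_chain_general q u hq hu1 lam L hL
end
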